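/- arXiv:1605.05123 — 2 statements merged into one kernel-verified Lean document; each statement's English description precedes it below -/
import Mathlib

section
/- Let G be a simple graph and v a vertex that has no incident edges in G. Let (s_1, …, s_r) be a length-r valid sequence for v in G with graph sequence G_1 = G, G_{i+1} = G_i + (s_i, v). Then the local girth of v in the final graph satisfies g_v(G_{r+1}) = min_{1 ≤ i ≤ r} ( dist_{G_i}(s_i, v) + 1 ) in ℕ∞. -/
open SimpleGraph

variable {V : Type*}

/-- `G + (c,v)`: the graph obtained from `G` by adding the edge `{c, v}`. -/
def addEdge (G : SimpleGraph V) (c v : V) : SimpleGraph V :=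
  G ⊔ SimpleGraph.fromEdgeSet {s(c, v)}

/-- The local girth of a vertex `v`: the infimum (in `ℕ∞`) of the lengths of
cycles of `G` passing through `v`. -/
noncomputable def localGirth (G : SimpleGraph V) (v : V) : ℕ∞ :=
  ⨅ (a : V) (w : G.Walk a a) (_ : w.IsCycle) (_ : v ∈ w.support), (w.length : ℕ∞)

/-- The edge local girth of `e`: the infimum (in `ℕ∞`) of the lengths of
cycles of `G` containing the edge `e`. -/
noncomputable def edgeLocalGirth (G : SimpleGraph V) (e : Sym2 V) : ℕ∞ :=
  ⨅ (a : V) (w : G.Walk a a) (_ : w.IsCycle) (_ : e ∈ w.edges), (w.length : ℕ∞)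

/-- A length-`r` valid sequence for `v` in `G`: pairwise distinct vertices,
each distinct from `v` and not adjacent to `v` in `G`. -/
def ValidSeq (G : SimpleGraph V) (v : V) {r : ℕ} (s : Fin r → V) : Prop :=
  Function.Injective s ∧ ∀ i, s i ≠ v ∧ ¬ G.Adj (s i) v

/-- The graph sequence of a sequence `s`: `graphSeq G v s 0 = G₁ = G` and
`graphSeq G v s i = G_{i+1} = G_i + (s_i, v)`. -/
def graphSeq (G : SimpleGraph V) (v : V) {r : ℕ} (s : Fin r → V) : ℕ → SimpleGraph V
  | 0 => G
  | i + 1 => if h : i < r then addEdge (graphSeq G v s i) (s ⟨i, h⟩) v else graphSeq G v s i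

/-- The `r`-edge local girth of `v` in `G`: the supremum, over all length-`r`
valid sequences `s` for `v`, of the local girth of `v` in the final graph. -/
noncomputable def multiEdgeLocalGirth (G : SimpleGraph V) (v : V) (r : ℕ) : ℕ∞ :=
  ⨆ (s : Fin r → V) (_ : ValidSeq G v s), localGirth (graphSeq G v s r) v

/-- The `r`-edge local girth of `c` with respect to `v`:
`g_v(G+(c,v))` if `r = 1`, and `g_v^{(r-1)}(G+(c,v))` if `r ≥ 2`. -/
noncomputable def cnMultiEdgeLocalGirth (G : SimpleGraph V) (c v : V) (r : ℕ) : ℕ∞ :=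
  if r = 1 then localGirth (addEdge G c v) v
  else multiEdgeLocalGirth (addEdge G c v) v (r - 1)

/-!
Adding a new edge `{c, v}` to a graph `G` creates exactly the cycles that use this edge, and
removing the edge from such a cycle leaves a `c`–`v` walk in `G`; conversely a shortest `c`–`v`
path in `G` closes up with the new edge to a cycle. Hence
`g_v(G + (c,v)) = min (g_v(G)) (dist_G(c,v) + 1)`, and the theorem follows by induction along
the graph sequence, starting from `g_v(G) = ∞` for the isolated vertex `v`.
-/

namespace SimpleGraph.Walk

lemma IsTrail.exists_walk_length_lt_notMem_edges {G : SimpleGraph V} {u c v : V}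
    {w : G.Walk u u} (hw : w.IsTrail) (hc : c ∈ w.support) (hv : v ∈ w.support) (hcv : c ≠ v)
    (e : Sym2 V) : ∃ q : G.Walk c v, e ∉ q.edges ∧ q.length < w.length := by
  classical
  set w' := w.rotate c hc
  have hv' : v ∈ w'.support := (w.mem_support_rotate_iff c hc).2 hv
  set A := w'.takeUntil v hv'
  set B := w'.dropUntil v hv'
  have hsplit : A.append B = w' := w'.take_spec hv'
  have hnodup : (A.edges ++ B.edges).Nodup := by
    rw [← edges_append, hsplit]
    exact (hw.rotate hc).edges_nodup
  have hlen : A.length + B.length = w.length := by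
    rw [← length_append, hsplit, length_rotate]
  have hA : A.length ≠ 0 := fun h => hcv (eq_of_length_eq_zero h)
  have hB : B.length ≠ 0 := fun h => hcv (eq_of_length_eq_zero h).symm
  by_cases he : e ∈ A.edges
  · refine ⟨B.reverse, ?_, ?_⟩
    · simpa using List.disjoint_of_nodup_append hnodup he
    · rw [length_reverse]; omega
  · exact ⟨A, he, by omega⟩

end SimpleGraph.Walk

section LocalGirth

variable {G H : SimpleGraph V} {v : V}

lemma localGirth_le {a : V} {w : G.Walk a a} (hw : w.IsCycle) (hv : v ∈ w.support) :
    localGirth G v ≤ w.length :=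
  iInf₂_le_of_le a w (iInf₂_le hw hv)

lemma le_localGirth {n : ℕ∞}
    (h : ∀ (a : V) (w : G.Walk a a), w.IsCycle → v ∈ w.support → n ≤ w.length) :
    n ≤ localGirth G v :=
  le_iInf₂ fun a w => le_iInf₂ fun hw hv => h a w hw hv

lemma localGirth_anti (h : G ≤ H) (v : V) : localGirth H v ≤ localGirth G v :=
  le_localGirth fun _ w hw hv => by
    simpa using localGirth_le (hw.mapLe h) (by simpa using hv)

lemma localGirth_eq_top_of_forall_not_adj (hv : ∀ w : V, ¬ G.Adj v w) :
    localGirth G v = ⊤ := by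
  classical
  exact top_le_iff.1 <| le_localGirth fun _ w hw hmem =>
    (hv _ (Walk.adj_snd (hw.rotate hmem).not_nil)).elim

end LocalGirth

section AddEdge

variable {G : SimpleGraph V} {c v : V}

lemma le_addEdge : G ≤ addEdge G c v := le_sup_left

lemma addEdge_adj_of_ne (hcv : c ≠ v) : (addEdge G c v).Adj c v := by
  simp [addEdge, hcv]

lemma mem_edgeSet_of_mem_edgeSet_addEdge {e : Sym2 V} (he : e ∈ (addEdge G c v).edgeSet)
    (hne : e ≠ s(c, v)) : e ∈ G.edgeSet := by
  simp only [addEdge, edgeSet_sup, edgeSet_fromEdgeSet, Set.mem_union, Set.mem_sdiff,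
    Set.mem_singleton_iff] at he
  tauto

lemma localGirth_addEdge_le_edist_add_one (hcv : c ≠ v) (hadj : ¬ G.Adj c v) :
    localGirth (addEdge G c v) v ≤ G.edist c v + 1 := by
  by_cases hreach : G.Reachable c v
  · obtain ⟨p, hp, hlen⟩ := hreach.exists_path_of_dist
    have hsub : ∀ e ∈ p.edges, e ∈ (addEdge G c v).edgeSet :=
      fun e he => edgeSet_mono le_addEdge (p.edges_subset_edgeSet he)
    have hcycle : (Walk.cons (addEdge_adj_of_ne hcv).symm (p.transfer _ hsub)).IsCycle := by
      refine (Walk.cons_isCycle_iff _ _).2 ⟨hp.transfer hsub, fun he => hadj ?_⟩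
      rw [Walk.edges_transfer, Sym2.eq_swap] at he
      exact p.adj_of_mem_edges he
    calc localGirth (addEdge G c v) v ≤ _ := localGirth_le hcycle (Walk.start_mem_support _)
      _ = G.edist c v + 1 := by
        rw [Walk.length_cons, Walk.length_transfer, hlen, ← hreach.coe_dist_eq_edist]
        push_cast
        rfl
  · simp [edist_eq_top_of_not_reachable hreach]

lemma localGirth_addEdge (hcv : c ≠ v) (hadj : ¬ G.Adj c v) :
    localGirth (addEdge G c v) v = localGirth G v ⊓ (G.edist c v + 1) := by
  refine le_antisymm
    (le_inf (localGirth_anti le_addEdge v) (localGirth_addEdge_le_edist_add_one hcv hadj))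
    (le_localGirth fun a w hw hv => ?_)
  by_cases he : s(c, v) ∈ w.edges
  · obtain ⟨q, hq, hlen⟩ := hw.isTrail.exists_walk_length_lt_notMem_edges
      (w.fst_mem_support_of_mem_edges he) hv hcv s(c, v)
    have hqG : ∀ e ∈ q.edges, e ∈ G.edgeSet := fun e he' =>
      mem_edgeSet_of_mem_edgeSet_addEdge
        (q.edges_subset_edgeSet he') (ne_of_mem_of_not_mem he' hq)
    calc localGirth G v ⊓ (G.edist c v + 1) ≤ G.edist c v + 1 := inf_le_right
      _ ≤ (q.transfer G hqG).length + 1 := by gcongr; exact edist_le _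
      _ ≤ w.length := by rw [Walk.length_transfer]; exact_mod_cast hlen
  · have hwG : ∀ e ∈ w.edges, e ∈ G.edgeSet := fun e he' =>
      mem_edgeSet_of_mem_edgeSet_addEdge
        (w.edges_subset_edgeSet he') (ne_of_mem_of_not_mem he' he)
    calc localGirth G v ⊓ (G.edist c v + 1) ≤ localGirth G v := inf_le_left
      _ ≤ (w.transfer G hwG).length :=
        localGirth_le (hw.transfer hwG) (by rwa [Walk.support_transfer])
      _ = w.length := by rw [Walk.length_transfer]

end AddEdge

lemma Fin.iInf_val_lt_succ {α : Type*} [CompleteLattice α] {r n : ℕ} (hn : n < r)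
    (f : Fin r → α) :
    ⨅ (i : Fin r) (_ : (i : ℕ) < n + 1), f i =
      (⨅ (i : Fin r) (_ : (i : ℕ) < n), f i) ⊓ f ⟨n, hn⟩ := by
  simp only [Nat.lt_succ_iff_lt_or_eq, iInf_or, iInf_inf_eq]
  congr 1
  exact le_antisymm (iInf₂_le (κ := fun i : Fin r => (i : ℕ) = n) ⟨n, hn⟩ rfl)
    (le_iInf₂ fun i hi => by rw [show i = ⟨n, hn⟩ from Fin.ext hi])

section GraphSeq

variable {G : SimpleGraph V} {v : V} {r : ℕ} {s : Fin r → V}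

lemma graphSeq_succ {n : ℕ} (hn : n < r) :
    graphSeq G v s (n + 1) = addEdge (graphSeq G v s n) (s ⟨n, hn⟩) v := by
  rw [graphSeq, dif_pos hn]

lemma not_graphSeq_adj (hs : ValidSeq G v s) {n : ℕ} {i : Fin r} (hn : n ≤ i) :
    ¬ (graphSeq G v s n).Adj (s i) v := by
  induction n with
  | zero => exact (hs.2 i).2
  | succ n ih =>
    rw [graphSeq_succ (by omega)]
    simp only [addEdge, sup_adj, fromEdgeSet_adj, Set.mem_singleton_iff, Sym2.congr_left]
    rintro (h | ⟨h, -⟩)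
    · exact ih (by omega) h
    · have := congrArg Fin.val (hs.1 h)
      simp only at this
      omega

lemma localGirth_graphSeq (hv : ∀ w : V, ¬ G.Adj v w) (hs : ValidSeq G v s) {n : ℕ}
    (hn : n ≤ r) :
    localGirth (graphSeq G v s n) v =
      ⨅ (i : Fin r) (_ : (i : ℕ) < n), ((graphSeq G v s i).edist (s i) v + 1) := by
  induction n with
  | zero => simpa [graphSeq] using localGirth_eq_top_of_forall_not_adj hv
  | succ n ih =>
    rw [graphSeq_succ hn, localGirth_addEdge (hs.2 ⟨n, hn⟩).1 (not_graphSeq_adj hs le_rfl),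
      ih (by omega), Fin.iInf_val_lt_succ hn]

end GraphSeq

theorem stmt_4_general (G : SimpleGraph V) (v : V) (hv : ∀ w : V, ¬ G.Adj v w)
    {r : ℕ} (s : Fin r → V) (hs : ValidSeq G v s) :
    localGirth (graphSeq G v s r) v =
      ⨅ i : Fin r, ((graphSeq G v s i.1).edist (s i) v + 1) := by
  simp only [localGirth_graphSeq hv hs le_rfl, Fin.is_lt, iInf_pos]

/-- If `v` has no incident edges in `G` and `(s_1, …, s_r)` is a length-`r`
valid sequence for `v` with graph sequence `G_1 = G`, `G_{i+1} = G_i + (s_i, v)`, then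
`g_v(G_{r+1}) = min_{1 ≤ i ≤ r} (dist_{G_i}(s_i, v) + 1)` in `ℕ∞`. -/
theorem stmt_4 (G : SimpleGraph V) (v : V) (hv : ∀ w : V, ¬ G.Adj v w)
    {r : ℕ} (hr : 1 ≤ r) (s : Fin r → V) (hs : ValidSeq G v s) :
    localGirth (graphSeq G v s r) v =
      ⨅ i : Fin r, ((graphSeq G v s i.1).edist (s i) v + 1) :=
  stmt_4_general G v hv s hs
end

section
/- Let G be a simple graph, v a vertex, r ≥ 2 an integer, and let c, c' be two distinct vertices, each distinct from v and not adjacent to v in G. Then g_{c,v}^{(r)}(G) ≥ g_{c,v}^{(r-1)}( G+(c',v) ), i.e., the r-edge local girth of c with respect to v in G is at least the (r−1)-edge local girth of c with respect to v in the graph obtained from G by adding the edge {c',v}. -/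
open SimpleGraph

variable {V : Type*}

lemma addEdge_adj (G : SimpleGraph V) (c v a b : V) :
    (addEdge G c v).Adj a b ↔ G.Adj a b ∨ (s(a,b) = s(c,v) ∧ a ≠ b) := by
  simp [addEdge]

lemma addEdge_comm (G : SimpleGraph V) (a b v : V) :
    addEdge (addEdge G a v) b v = addEdge (addEdge G b v) a v := by
  simp only [addEdge, sup_assoc]
  rw [sup_comm (SimpleGraph.fromEdgeSet {s(a,v)}) (SimpleGraph.fromEdgeSet {s(b,v)})]

lemma multi_zero (X : SimpleGraph V) (v : V) :
    multiEdgeLocalGirth X v 0 = localGirth X v := by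
  apply le_antisymm
  · exact iSup₂_le fun s _ => le_rfl
  · exact le_iSup₂_of_le (fun i => i.elim0) ⟨fun i => i.elim0, fun i => i.elim0⟩ le_rfl

lemma main_step (H : SimpleGraph V) (v c' : V) (hc'v : c' ≠ v) (hadj : ¬ H.Adj c' v) (m : ℕ) :
    multiEdgeLocalGirth (addEdge H c' v) v m ≤ multiEdgeLocalGirth H v (m + 1) := by
  apply iSup₂_le
  intro s hs
  set s' : Fin (m+1) → V := Fin.cons c' s with hs'
  have hnot : ∀ i : Fin m, s i ≠ c' := fun i hi =>
    (hs.2 i).2 (hi ▸ (addEdge_adj H c' v c' v).2 (Or.inr ⟨rfl, hc'v⟩))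
  have hvalid : ValidSeq H v s' := by
    constructor
    · rw [hs', Fin.cons_injective_iff]
      exact ⟨fun ⟨i, hi⟩ => hnot i hi, hs.1⟩
    · intro i
      induction i using Fin.cases with
      | zero => exact ⟨hc'v, hadj⟩
      | succ i =>
        refine ⟨(hs.2 i).1, fun h => (hs.2 i).2 ?_⟩
        simp only [hs', Fin.cons_succ] at *
        exact (addEdge_adj H c' v _ v).2 (Or.inl h)
  have hgraph : ∀ n, n ≤ m → graphSeq (addEdge H c' v) v s n = graphSeq H v s' (n + 1) := by
    intro n hn
    induction n with
    | zero =>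
      show _ = graphSeq H v s' 1
      simp [graphSeq, hs']
    | succ k ih =>
      have hk : k ≤ m := Nat.le_of_succ_le hn
      show graphSeq (addEdge H c' v) v s (k+1) = graphSeq H v s' (k+2)
      rw [graphSeq, graphSeq, dif_pos (by omega : k < m), dif_pos (by omega : k + 1 < m + 1),
        ih hk]
      congr 1
  calc localGirth (graphSeq (addEdge H c' v) v s m) v
      = localGirth (graphSeq H v s' (m+1)) v := by rw [hgraph m le_rfl]
    _ ≤ _ := le_iSup₂_of_le s' hvalid le_rfl


/-- For `r ≥ 2` and distinct vertices `c, c'`, each distinct from `v` and not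
adjacent to `v` in `G`, `g_{c,v}^{(r)}(G) ≥ g_{c,v}^{(r-1)}(G+(c',v))`. -/
theorem stmt_9 (G : SimpleGraph V) (v : V) {r : ℕ} (hr : 2 ≤ r)
    (c c' : V) (hcc : c ≠ c') (hcv : c ≠ v) (hc'v : c' ≠ v)
    (hadj : ¬ G.Adj c v) (hadj' : ¬ G.Adj c' v) :
    cnMultiEdgeLocalGirth (addEdge G c' v) c v (r - 1) ≤ cnMultiEdgeLocalGirth G c v r := by
  obtain ⟨m, rfl⟩ : ∃ m, r = m + 2 := ⟨r - 2, by omega⟩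
  have hadjc : ¬ (addEdge G c v).Adj c' v := by
    rw [addEdge_adj]
    push_neg
    refine ⟨hadj', fun h => absurd h ?_⟩
    simp [Sym2.eq, Sym2.rel_iff', hcc.symm, hc'v]
  have key := main_step (addEdge G c v) v c' hc'v hadjc
  simp only [cnMultiEdgeLocalGirth]
  rw [show m + 2 - 1 = m + 1 from rfl, if_neg (by omega : ¬ m + 2 = 1)]
  by_cases hm : m = 0
  · subst hm
    rw [if_pos rfl, addEdge_comm, ← multi_zero]
    exact key 0
  · rw [if_neg (by omega : ¬ m + 1 = 1), show m + 1 - 1 = m from rfl, addEdge_comm]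
    exact key m
end
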